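/- arXiv:1909.12713 — 2 statements merged into one kernel-verified Lean document; each statement's English description precedes it below -/
import Mathlib

section
/- Let ≤ be a well-order on objects such that tuples of equal length are ordered lexicographically and finite sets are ordered by comparing their sorted sequences lexicographically. If o is an object, a ∈ atoms(o), a' ∈ uset(a) with a' < a and a' ∉ atoms(o), and π is the transposition swapping a and a' (identity elsewhere), then o^π < o. -/
/-- Objects built inductively from atoms by finite tuples and finite sets
(a set node carries the list of its elements). -/
inductive Obj (A : Type) : Type
  | atom : A → Obj A
  | tup  : List (Obj A) → Obj A
  | sett : List (Obj A) → Obj A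

/-- Applying a map on atoms to an object, recursively. -/
def Obj.applyPerm {A : Type} (π : A → A) : Obj A → Obj A
  | .atom a => .atom (π a)
  | .tup l => .tup (l.attach.map (fun o => Obj.applyPerm π o.1))
  | .sett l => .sett (l.attach.map (fun o => Obj.applyPerm π o.1))
decreasing_by all_goals (have := List.sizeOf_lt_of_mem o.2; simp at this ⊢; omega)

/-- The list of atoms occurring in an object. -/
def Obj.atomsList {A : Type} : Obj A → List A
  | .atom a => [a]
  | .tup l => l.attach.flatMap (fun o => Obj.atomsList o.1)
  | .sett l => l.attach.flatMap (fun o => Obj.atomsList o.1)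
decreasing_by all_goals (have := List.sizeOf_lt_of_mem o.2; simp at this ⊢; omega)

/-- The set of atoms occurring in an object. -/
def Obj.atoms {A : Type} (o : Obj A) : Set A := {a | a ∈ o.atomsList}

/-- Well-formed objects: the element lists of set nodes are strictly sorted
(so they faithfully represent finite sets, listed in increasing order). -/
def Obj.WF {A : Type} [LinearOrder (Obj A)] : Obj A → Prop
  | .atom _ => True
  | .tup l => ∀ o ∈ l, Obj.WF o
  | .sett l => l.Pairwise (· < ·) ∧ ∀ o ∈ l, Obj.WF o

/-- Applying a map on atoms to an object, recursively; the element list of a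
set node is re-sorted, so that set nodes keep representing sets. -/
def Obj.applyPermS {A : Type} [LinearOrder (Obj A)] (π : A → A) : Obj A → Obj A
  | .atom a => .atom (π a)
  | .tup l => .tup (l.attach.map (fun o => Obj.applyPermS π o.1))
  | .sett l => .sett ((l.attach.map (fun o => Obj.applyPermS π o.1)).mergeSort
      (fun a b => decide (a ≤ b)))
decreasing_by all_goals (have := List.sizeOf_lt_of_mem o.2; simp at this ⊢; omega)

/-! Let `π` be a permutation of the atoms with `π b ≤ b` for every atom `b` of a well-formed
object `o`. By induction on `o`, `o^π ≤ o`, with equality only if `π` fixes every atom of `o`.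
For tuples, componentwise `≤` gives lexicographic `≤`. For a set node, the re-sorted image of the
element list is lexicographically below the unsorted image, because a sorted list is the least of
its permutations, and that image is componentwise below the original list; injectivity of
`o ↦ o^π` on well-formed objects keeps the re-sorted image strictly sorted, so set nodes compare
lexicographically. The transposition of `a` and `a'` qualifies when `a' < a` and `a'` does not
occur in `o`, and it moves the atom `a`. -/

namespace List

variable {β : Type*} [LinearOrder β]

theorem map_le_of_forall_le {f : β → β} {l : List β} (h : ∀ x ∈ l, f x ≤ x) : l.map f ≤ l := by
  induction l with
  | nil => exact le_rfl
  | cons a l ih =>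
    rcases (h a mem_cons_self).lt_or_eq with hlt | heq
    · exact le_of_lt (Lex.rel hlt)
    · rw [map_cons, heq]
      exact cons_le_cons _ (ih fun x hx => h x (mem_cons_of_mem _ hx))

theorem SortedLE.le_of_perm {l₁ l₂ : List β} (hs : l₁.SortedLE) (hp : l₁ ~ l₂) : l₁ ≤ l₂ := by
  induction l₂ generalizing l₁ with
  | nil => rw [hp.eq_nil]
  | cons b l₂ ih =>
    obtain _ | ⟨a, l₁⟩ := l₁
    · exact absurd hp.symm.eq_nil (cons_ne_nil _ _)
    have hab : a ≤ b := by
      rcases mem_cons.1 (hp.symm.subset mem_cons_self) with rfl | hb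
      · exact le_rfl
      · exact rel_of_pairwise_cons hs.pairwise hb
    rcases hab.lt_or_eq with hlt | rfl
    · exact le_of_lt (Lex.rel hlt)
    · exact cons_le_cons _ (ih hs.pairwise.of_cons.sortedLE hp.cons_inv)

end List

namespace Obj

variable {A : Type}

@[induction_eliminator]
theorem induction_mem {motive : Obj A → Prop} (atom : ∀ a, motive (atom a))
    (tup : ∀ l, (∀ o ∈ l, motive o) → motive (tup l))
    (sett : ∀ l, (∀ o ∈ l, motive o) → motive (sett l)) : ∀ o, motive o
  | .atom a => atom a
  | .tup l => tup l fun o _ => induction_mem atom tup sett o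
  | .sett l => sett l fun o _ => induction_mem atom tup sett o
decreasing_by all_goals (have := List.sizeOf_lt_of_mem ‹o ∈ l›; simp; omega)

@[simp]
theorem mem_atomsList_atom {a b : A} : a ∈ (atom b).atomsList ↔ a = b := by
  simp [atomsList]

@[simp]
theorem mem_atomsList_tup {a : A} {l : List (Obj A)} :
    a ∈ (tup l).atomsList ↔ ∃ o ∈ l, a ∈ o.atomsList := by
  rw [atomsList]; simp

@[simp]
theorem mem_atomsList_sett {a : A} {l : List (Obj A)} :
    a ∈ (sett l).atomsList ↔ ∃ o ∈ l, a ∈ o.atomsList := by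
  rw [atomsList]; simp

section Order

variable [LinearOrder (Obj A)]

@[simp]
theorem wf_tup {l : List (Obj A)} : (tup l).WF ↔ ∀ o ∈ l, o.WF := by
  rw [WF]

@[simp]
theorem wf_sett {l : List (Obj A)} : (sett l).WF ↔ l.Pairwise (· < ·) ∧ ∀ o ∈ l, o.WF := by
  rw [WF]

@[simp]
theorem applyPermS_atom (π : A → A) (a : A) : (atom a).applyPermS π = atom (π a) := by
  rw [applyPermS]

@[simp]
theorem applyPermS_tup (π : A → A) (l : List (Obj A)) :
    (tup l).applyPermS π = tup (l.map (applyPermS π)) := by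
  rw [applyPermS]; simp

@[simp]
theorem applyPermS_sett (π : A → A) (l : List (Obj A)) :
    (sett l).applyPermS π = sett ((l.map (applyPermS π)).mergeSort (· ≤ ·)) := by
  rw [applyPermS]; simp

theorem applyPermS_applyPermS_of_leftInverse {π ρ : A → A} (h : Function.LeftInverse ρ π)
    {o : Obj A} (hwf : o.WF) : (o.applyPermS π).applyPermS ρ = o := by
  induction o with
  | atom b => simp [h b]
  | tup l ih =>
    rw [wf_tup] at hwf
    simp only [applyPermS_tup, List.map_map, tup.injEq]
    exact List.map_congr_left (fun o ho => ih o ho (hwf o ho)) |>.trans l.map_id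
  | sett l ih =>
    rw [wf_sett] at hwf
    rw [applyPermS_sett, applyPermS_sett, sett.injEq]
    have hl : (l.map (applyPermS π)).map (applyPermS ρ) = l := by
      rw [List.map_map]
      exact List.map_congr_left (fun o ho => ih o ho (hwf.2 o ho)) |>.trans l.map_id
    refine List.Perm.eq_of_sortedLE List.sortedLE_mergeSort hwf.1.sortedLT.sortedLE ?_
    exact (List.mergeSort_perm _ _).trans (((List.mergeSort_perm _ _).map _).trans (.of_eq hl))

theorem injOn_applyPermS (π : Equiv.Perm A) : Set.InjOn (applyPermS π) {o | o.WF} :=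
  Set.LeftInvOn.injOn (f₁' := applyPermS π.symm)
    fun _ ho => applyPermS_applyPermS_of_leftInverse π.left_inv ho

theorem pairwise_lt_mergeSort_map_applyPermS (π : Equiv.Perm A) {l : List (Obj A)}
    (hl : l.Pairwise (· < ·)) (hwf : ∀ o ∈ l, o.WF) :
    ((l.map (applyPermS π)).mergeSort (· ≤ ·)).Pairwise (· < ·) := by
  have hnodup : ((l.map (applyPermS π)).mergeSort (· ≤ ·)).Nodup :=
    (List.mergeSort_perm _ _).nodup_iff.2 <| hl.nodup.map_on
      fun x hx y hy => injOn_applyPermS π (hwf x hx) (hwf y hy)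
  exact (List.sortedLE_mergeSort.sortedLT_of_nodup hnodup).pairwise

end Order

variable (A : Type) [LinearOrder A] [LinearOrder (Obj A)]

structure IsLexOrder : Prop where
  atom_lt_atom : ∀ a b : A, atom a < atom b ↔ a < b
  tup_lt_tup : ∀ l₁ l₂ : List (Obj A), l₁.length = l₂.length →
    (tup l₁ < tup l₂ ↔ List.Lex (· < ·) l₁ l₂)
  sett_lt_sett : ∀ l₁ l₂ : List (Obj A), l₁.Pairwise (· < ·) → l₂.Pairwise (· < ·) →
    (sett l₁ < sett l₂ ↔ List.Lex (· < ·) l₁ l₂)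

variable {A}

theorem IsLexOrder.applyPermS_le (hA : IsLexOrder A) (π : Equiv.Perm A) {o : Obj A} (hwf : o.WF)
    (hle : ∀ b ∈ o.atomsList, π b ≤ b) :
    o.applyPermS π ≤ o ∧ (o.applyPermS π = o → ∀ b ∈ o.atomsList, π b = b) := by
  induction o with
  | atom b =>
    simp only [mem_atomsList_atom, forall_eq, applyPermS_atom, atom.injEq] at hle ⊢
    refine ⟨?_, id⟩
    rcases hle.lt_or_eq with hlt | heq
    · exact ((hA.atom_lt_atom _ _).2 hlt).le
    · rw [heq]
  | tup l ih =>
    rw [wf_tup] at hwf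
    simp only [mem_atomsList_tup, forall_exists_index, and_imp] at hle ⊢
    replace ih := fun o ho => ih o ho (hwf o ho) (fun b => hle b o ho)
    have hmap : l.map (applyPermS π) ≤ l := List.map_le_of_forall_le fun o ho => (ih o ho).1
    rw [applyPermS_tup, tup.injEq]
    constructor
    · rcases hmap.lt_or_eq with hlt | heq
      · exact ((hA.tup_lt_tup _ _ (List.length_map _)).2 hlt).le
      · rw [heq]
    · intro heq b o ho
      exact (ih o ho).2 (List.map_inj_left.1 (heq.trans l.map_id.symm) o ho) b
  | sett l ih =>
    rw [wf_sett] at hwf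
    simp only [mem_atomsList_sett, forall_exists_index, and_imp] at hle ⊢
    replace ih := fun o ho => ih o ho (hwf.2 o ho) (fun b => hle b o ho)
    have hmap : l.map (applyPermS π) ≤ l := List.map_le_of_forall_le fun o ho => (ih o ho).1
    have hsort : (l.map (applyPermS π)).mergeSort (· ≤ ·) ≤ l.map (applyPermS π) :=
      List.sortedLE_mergeSort.le_of_perm (List.mergeSort_perm _ _)
    rw [applyPermS_sett, sett.injEq]
    constructor
    · rcases (hsort.trans hmap).lt_or_eq with hlt | heq
      · exact ((hA.sett_lt_sett _ _ (pairwise_lt_mergeSort_map_applyPermS π hwf.1 hwf.2)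
          hwf.1).2 hlt).le
      · rw [heq]
    · intro heq b o ho
      have heq' : l.map (applyPermS π) = l := le_antisymm hmap (heq.symm.le.trans hsort)
      exact (ih o ho).2 (List.map_inj_left.1 (heq'.trans l.map_id.symm) o ho) b

end Obj

theorem swap_missing_smaller_atom_decreases_general {A : Type} [LinearOrder A] [LinearOrder (Obj A)]
    (hatom : ∀ a b : A, Obj.atom a < Obj.atom b ↔ a < b)
    (htup : ∀ l₁ l₂ : List (Obj A), l₁.length = l₂.length →
        (Obj.tup l₁ < Obj.tup l₂ ↔ List.Lex (· < ·) l₁ l₂))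
    (hsett : ∀ l₁ l₂ : List (Obj A), l₁.Pairwise (· < ·) → l₂.Pairwise (· < ·) →
        (Obj.sett l₁ < Obj.sett l₂ ↔ List.Lex (· < ·) l₁ l₂))
    (o : Obj A) (hwf : o.WF)
    (a a' : A) (ha : a ∈ o.atoms) (hlt : a' < a)
    (hna : a' ∉ o.atoms) :
    o.applyPermS (Equiv.swap a a') < o := by
  have hswap : ∀ b ∈ o.atomsList, Equiv.swap a a' b ≤ b := by
    intro b hb
    rcases eq_or_ne b a with rfl | hba
    · simpa using hlt.le
    · rw [Equiv.swap_apply_of_ne_of_ne hba (ne_of_mem_of_not_mem hb hna)]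
  obtain ⟨hle, hfix⟩ := (Obj.IsLexOrder.mk hatom htup hsett).applyPermS_le _ hwf hswap
  exact hle.lt_of_ne fun heq => hlt.ne (by simpa using hfix heq a ha)

/-- if a ∈ atoms(o), a' ∈ uset(a), a' < a and a' ∉ atoms(o), then
applying the transposition swapping a and a' yields a strictly smaller object. -/
theorem swap_missing_smaller_atom_decreases {A : Type} [LinearOrder A] [LinearOrder (Obj A)] [WellFoundedLT (Obj A)]
    (hatom : ∀ a b : A, Obj.atom a < Obj.atom b ↔ a < b)
    (htup : ∀ l₁ l₂ : List (Obj A), l₁.length = l₂.length →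
        (Obj.tup l₁ < Obj.tup l₂ ↔ List.Lex (· < ·) l₁ l₂))
    (hsett : ∀ l₁ l₂ : List (Obj A), l₁.Pairwise (· < ·) → l₂.Pairwise (· < ·) →
        (Obj.sett l₁ < Obj.sett l₂ ↔ List.Lex (· < ·) l₁ l₂))
    (uset : A → Set A) (h1 : ∀ a, a ∈ uset a)
    (h2 : ∀ a b, uset a = uset b ∨ uset a ∩ uset b = ∅)
    (o : Obj A) (hwf : o.WF)
    (a a' : A) (ha : a ∈ o.atoms) (hu : a' ∈ uset a) (hlt : a' < a)
    (hna : a' ∉ o.atoms) :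
    o.applyPermS (Equiv.swap a a') < o :=
  swap_missing_smaller_atom_decreases_general hatom htup hsett o hwf a a' ha hlt hna
end

section
/- If a tuple o = (o₁,…,o_{n+1}) is a canonical form, then its parent (o₁,…,o_n) is also a canonical form (or ⊥ when n = 0). -/
/-! A permutation acts on a tuple componentwise, so `o^π` is the parent's image followed by
`x^π`. Tuples of equal length compare lexicographically, hence `o ≤ o^π` forces the parent
to be `≤` its image: either the first difference already lies in the parent, or the parents
coincide. -/

theorem List.Lex.of_append_of_length_eq {α : Type*} {r : α → α → Prop} :
    ∀ {a b c d : List α}, a.length = b.length →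
      List.Lex r (a ++ c) (b ++ d) → List.Lex r a b ∨ a = b
  | [], [], _, _, _, _ => Or.inr rfl
  | _ :: _, _ :: _, _, _, _, .rel hr => Or.inl (.rel hr)
  | _ :: _, _ :: _, _, _, hlen, .cons hl =>
    (of_append_of_length_eq (Nat.succ.inj hlen) hl).imp .cons (congrArg _)

theorem Obj.applyPermS_tup_s10 {A : Type} [LinearOrder (Obj A)] (π : A → A) (l : List (Obj A)) :
    (Obj.tup l).applyPermS π = Obj.tup (l.map (Obj.applyPermS π)) := by
  rw [Obj.applyPermS]
  simp

theorem Obj.tup_le_tup_of_append_le {A : Type} [LinearOrder (Obj A)]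
    (htup : ∀ l₁ l₂ : List (Obj A), l₁.length = l₂.length →
        (Obj.tup l₁ < Obj.tup l₂ ↔ List.Lex (· < ·) l₁ l₂))
    {a b c d : List (Obj A)} (hab : a.length = b.length) (hcd : c.length = d.length)
    (h : Obj.tup (a ++ c) ≤ Obj.tup (b ++ d)) :
    Obj.tup a ≤ Obj.tup b := by
  rcases h.eq_or_lt with heq | hlt
  · rw [(List.append_inj (Obj.tup.inj heq) hab).1]
  · have hlex := (htup _ _ (by simp [hab, hcd])).1 hlt
    rcases List.Lex.of_append_of_length_eq hab hlex with hlt' | rfl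
    · exact ((htup a b hab).2 hlt').le
    · rfl

theorem parent_of_canonical_tuple_general {A : Type} [LinearOrder (Obj A)]
    (htup : ∀ l₁ l₂ : List (Obj A), l₁.length = l₂.length →
        (Obj.tup l₁ < Obj.tup l₂ ↔ List.Lex (· < ·) l₁ l₂))
    (uset : A → Set A)
    (l : List (Obj A)) (x : Obj A)
    (hcan : ∀ π : Equiv.Perm A, (∀ a, π a ∈ uset a) →
      Obj.tup (l ++ [x]) ≤ (Obj.tup (l ++ [x])).applyPermS π) :
    ∀ π : Equiv.Perm A, (∀ a, π a ∈ uset a) →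
      Obj.tup l ≤ (Obj.tup l).applyPermS π := by
  intro π hπ
  have hext := hcan π hπ
  rw [Obj.applyPermS_tup_s10, List.map_append] at hext
  rw [Obj.applyPermS_tup_s10]
  exact Obj.tup_le_tup_of_append_le htup (List.length_map _).symm (List.length_map _).symm
    hext

/-- if a tuple (o₁,…,o_{n+1}) is a canonical form (≤ all its
images under allowed permutations), then its parent (o₁,…,o_n) is too. -/
theorem parent_of_canonical_tuple {A : Type} [LinearOrder A] [LinearOrder (Obj A)] [WellFoundedLT (Obj A)]
    (hatom : ∀ a b : A, Obj.atom a < Obj.atom b ↔ a < b)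
    (htup : ∀ l₁ l₂ : List (Obj A), l₁.length = l₂.length →
        (Obj.tup l₁ < Obj.tup l₂ ↔ List.Lex (· < ·) l₁ l₂))
    (hsett : ∀ l₁ l₂ : List (Obj A), l₁.Pairwise (· < ·) → l₂.Pairwise (· < ·) →
        (Obj.sett l₁ < Obj.sett l₂ ↔ List.Lex (· < ·) l₁ l₂))
    (uset : A → Set A) (h1 : ∀ a, a ∈ uset a)
    (h2 : ∀ a b, uset a = uset b ∨ uset a ∩ uset b = ∅)
    (l : List (Obj A)) (x : Obj A) (hwf : (Obj.tup (l ++ [x])).WF)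
    (hcan : ∀ π : Equiv.Perm A, (∀ a, π a ∈ uset a) →
      Obj.tup (l ++ [x]) ≤ (Obj.tup (l ++ [x])).applyPermS π) :
    ∀ π : Equiv.Perm A, (∀ a, π a ∈ uset a) →
      Obj.tup l ≤ (Obj.tup l).applyPermS π :=
  parent_of_canonical_tuple_general htup uset l x hcan
end
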